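/- arXiv:2006.04548 — 2 statements merged into one kernel-verified Lean document; each statement's English description precedes it below -/
import Mathlib

section
/- In the Gaussian regression model, let ε₁,…,εₙ and η₁,…,ηₘ be integrable real random variables with E[ε_i] = 0 for all i and E[η_j] = 0 for all j, and let L̃ be the (random) perturbed joint log-likelihood built from ε and η. Then for every fixed θ ∈ ℝᵐ: E[⟪∇L(θ), ∇L̃(θ)⟫] = ‖∇L(θ)‖². -/
/-!
Expanding the squares, the perturbed log-likelihood is `L θ + (∑ i, εᵢ fᵢ θ) / σ² + ⟪η, θ⟫ / α²`
plus a term independent of `θ`, so `∇L̃ θ = ∇L θ + ∑ i, (εᵢ / σ²) ∇fᵢ θ + η / α²`. Hence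
`⟪∇L θ, ∇L̃ θ⟫` is `‖∇L θ‖²` plus a combination of the `εᵢ` and `ηⱼ` with deterministic
coefficients, and the latter has expectation zero.
-/

open MeasureTheory InnerProductSpace
open scoped RealInnerProductSpace Gradient

section GradientAlgebra

variable {𝕜 F : Type*} [RCLike 𝕜] [NormedAddCommGroup F] [InnerProductSpace 𝕜 F] [CompleteSpace F]
  {f g : F → 𝕜} {f' g' x : F}

theorem HasGradientAt.add (hf : HasGradientAt f f' x) (hg : HasGradientAt g g' x) :
    HasGradientAt (fun y => f y + g y) (f' + g') x := by
  rw [hasGradientAt_iff_hasFDerivAt, map_add]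
  exact HasFDerivAt.add hf hg

theorem HasGradientAt.add_const (hf : HasGradientAt f f' x) (c : 𝕜) :
    HasGradientAt (fun y => f y + c) f' x :=
  HasFDerivAt.add_const c hf

theorem HasGradientAt.const_mul (hf : HasGradientAt f f' x) (c : 𝕜) :
    HasGradientAt (fun y => c * f y) ((starRingEnd 𝕜 c) • f') x := by
  rw [hasGradientAt_iff_hasFDerivAt, map_smulₛₗ, RCLike.conj_conj]
  exact HasFDerivAt.const_mul hf c

theorem HasGradientAt.sum {ι : Type*} {u : Finset ι} {A : ι → F → 𝕜} {A' : ι → F}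
    (h : ∀ i ∈ u, HasGradientAt (A i) (A' i) x) :
    HasGradientAt (fun y => ∑ i ∈ u, A i y) (∑ i ∈ u, A' i) x := by
  rw [hasGradientAt_iff_hasFDerivAt, map_sum]
  exact HasFDerivAt.fun_sum h

theorem hasGradientAt_inner_const (v : F) : HasGradientAt (fun y => inner 𝕜 v y) v x := by
  rw [hasGradientAt_iff_hasFDerivAt]
  exact (toDual 𝕜 F v).hasFDerivAt

end GradientAlgebra

section Centered

variable {Ω ι : Type*} [MeasurableSpace Ω] {P : Measure Ω} [Fintype ι] {ξ : ι → Ω → ℝ}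

theorem integrable_sum_mul_const (hξ : ∀ k, Integrable (ξ k) P) (a : ι → ℝ) :
    Integrable (fun ω => ∑ k, ξ k ω * a k) P :=
  integrable_finsetSum _ fun k _ => (hξ k).mul_const (a k)

theorem integral_sum_mul_const_eq_zero (hξ : ∀ k, Integrable (ξ k) P)
    (hξ₀ : ∀ k, ∫ ω, ξ k ω ∂P = 0) (a : ι → ℝ) :
    ∫ ω, ∑ k, ξ k ω * a k ∂P = 0 := by
  rw [integral_finsetSum _ fun k _ => (hξ k).mul_const (a k)]
  simp [integral_mul_const, hξ₀]

end Centered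

noncomputable section GaussianRegression

variable {n m : ℕ} (σ α : ℝ) (f : Fin n → EuclideanSpace ℝ (Fin m) → ℝ)

def gaussianLogLik (y : Fin n → ℝ) (μ θ : EuclideanSpace ℝ (Fin m)) : ℝ :=
  -(∑ i, (f i θ - y i) ^ 2 / (2 * σ ^ 2)) - ∑ j, (θ j - μ j) ^ 2 / (2 * α ^ 2)

theorem gaussianLogLik_add_perturbation (y e : Fin n → ℝ) (μ θ : EuclideanSpace ℝ (Fin m)) :
    gaussianLogLik σ α f (y + e) μ θ = gaussianLogLik σ α f y 0 θ
      + (∑ i, e i / σ ^ 2 * f i θ + (α ^ 2)⁻¹ * ⟪μ, θ⟫)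
      - (∑ i, e i * (2 * y i + e i) / (2 * σ ^ 2) + ‖μ‖ ^ 2 / (2 * α ^ 2)) := by
  have hlabel : ∀ i, (f i θ - (y + e) i) ^ 2 / (2 * σ ^ 2) = (f i θ - y i) ^ 2 / (2 * σ ^ 2)
      - e i / σ ^ 2 * f i θ + e i * (2 * y i + e i) / (2 * σ ^ 2) := fun i => by
    simp only [Pi.add_apply]; ring
  have hprior : ∀ j, (θ j - μ j) ^ 2 / (2 * α ^ 2) = (θ j - (0 : EuclideanSpace ℝ (Fin m)) j) ^ 2
      / (2 * α ^ 2) - (α ^ 2)⁻¹ * (θ j * μ j) + μ j ^ 2 / (2 * α ^ 2) := fun j => by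
    simp only [PiLp.zero_apply]; ring
  simp only [gaussianLogLik, hlabel, hprior, Finset.sum_add_distrib, Finset.sum_sub_distrib,
    EuclideanSpace.norm_sq_eq, PiLp.inner_apply, RCLike.inner_apply, conj_trivial,
    Real.norm_eq_abs, sq_abs, Finset.mul_sum, Finset.sum_div]
  ring

variable {σ α f}

theorem differentiableAt_gaussianLogLik {θ : EuclideanSpace ℝ (Fin m)}
    (hf : ∀ i, DifferentiableAt ℝ (f i) θ) (y : Fin n → ℝ) (μ : EuclideanSpace ℝ (Fin m)) :
    DifferentiableAt ℝ (gaussianLogLik σ α f y μ) θ := by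
  unfold gaussianLogLik
  fun_prop

theorem gradient_gaussianLogLik_add_perturbation {θ : EuclideanSpace ℝ (Fin m)}
    (hf : ∀ i, DifferentiableAt ℝ (f i) θ) (y e : Fin n → ℝ) (μ : EuclideanSpace ℝ (Fin m)) :
    ∇ (gaussianLogLik σ α f (y + e) μ) θ
      = ∇ (gaussianLogLik σ α f y 0) θ + ∑ i, (e i / σ ^ 2) • ∇ (f i) θ + (α ^ 2)⁻¹ • μ := by
  have hlin : HasGradientAt (fun θ => ∑ i, e i / σ ^ 2 * f i θ + (α ^ 2)⁻¹ * ⟪μ, θ⟫)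
      (∑ i, (e i / σ ^ 2) • ∇ (f i) θ + (α ^ 2)⁻¹ • μ) θ := by
    refine (HasGradientAt.sum fun i _ => ?_).add ?_
    · simpa using (hf i).hasGradientAt.const_mul (e i / σ ^ 2)
    · simpa using (hasGradientAt_inner_const μ).const_mul ((α ^ 2)⁻¹)
  have hL := (differentiableAt_gaussianLogLik (σ := σ) (α := α) hf y 0).hasGradientAt
  have hdecomp : gaussianLogLik σ α f (y + e) μ = fun θ => gaussianLogLik σ α f y 0 θ
      + (∑ i, e i / σ ^ 2 * f i θ + (α ^ 2)⁻¹ * ⟪μ, θ⟫)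
      + -(∑ i, e i * (2 * y i + e i) / (2 * σ ^ 2) + ‖μ‖ ^ 2 / (2 * α ^ 2)) :=
    funext fun θ => by rw [gaussianLogLik_add_perturbation, sub_eq_add_neg]
  rw [hdecomp, ((hL.add hlin).add_const _).gradient, add_assoc]

theorem inner_gradient_gaussianLogLik_add_perturbation {θ : EuclideanSpace ℝ (Fin m)}
    (hf : ∀ i, DifferentiableAt ℝ (f i) θ) (y e : Fin n → ℝ) (μ : EuclideanSpace ℝ (Fin m)) :
    ⟪∇ (gaussianLogLik σ α f y 0) θ, ∇ (gaussianLogLik σ α f (y + e) μ) θ⟫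
      = ‖∇ (gaussianLogLik σ α f y 0) θ‖ ^ 2
        + (∑ i, e i * (⟪∇ (gaussianLogLik σ α f y 0) θ, ∇ (f i) θ⟫ / σ ^ 2)
          + ∑ j, μ j * (∇ (gaussianLogLik σ α f y 0) θ j / α ^ 2)) := by
  rw [gradient_gaussianLogLik_add_perturbation hf, inner_add_right, inner_add_right,
    real_inner_self_eq_norm_sq, inner_sum, real_inner_smul_right, PiLp.inner_apply]
  simp only [real_inner_smul_right, RCLike.inner_apply, conj_trivial]
  rw [add_assoc, Finset.mul_sum]
  congr 2 <;> exact Finset.sum_congr rfl fun _ _ => by ring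

end GaussianRegression

theorem expectation_inner_gradient_perturbed_gradient_general
    {n m : ℕ}
    (σ α : ℝ)
    (y : Fin n → ℝ)
    (f : Fin n → EuclideanSpace ℝ (Fin m) → ℝ)
    (hf : ∀ i, ContDiff ℝ 2 (f i))
    (L : EuclideanSpace ℝ (Fin m) → ℝ)
    (hL : ∀ θ, L θ = -(∑ i, (f i θ - y i) ^ 2 / (2 * σ ^ 2))
      - ∑ j, (θ j) ^ 2 / (2 * α ^ 2))
    {Ω : Type*} [MeasurableSpace Ω] (P : Measure Ω) [IsProbabilityMeasure P]
    (ε : Ω → Fin n → ℝ) (η : Ω → EuclideanSpace ℝ (Fin m))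
    (hεint : ∀ i, Integrable (fun ω => ε ω i) P)
    (hηint : ∀ j, Integrable (fun ω => η ω j) P)
    (hεmean : ∀ i, ∫ ω, ε ω i ∂P = 0)
    (hηmean : ∀ j, ∫ ω, η ω j ∂P = 0)
    (Lt : Ω → EuclideanSpace ℝ (Fin m) → ℝ)
    (hLt : ∀ ω θ, Lt ω θ = -(∑ i, (f i θ - y i - ε ω i) ^ 2 / (2 * σ ^ 2))
      - ∑ j, (θ j - η ω j) ^ 2 / (2 * α ^ 2)) :
    ∀ θ, ∫ ω, ⟪gradient L θ, gradient (Lt ω) θ⟫ ∂P = ‖gradient L θ‖ ^ 2 := by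
  intro θ
  have hfθ : ∀ i, DifferentiableAt ℝ (f i) θ :=
    fun i => ((hf i).differentiable (by norm_num)).differentiableAt
  have hL' : L = gaussianLogLik σ α f y 0 := funext fun θ => by simp [hL, gaussianLogLik]
  have hLt' : ∀ ω, Lt ω = gaussianLogLik σ α f (y + ε ω) (η ω) :=
    fun ω => funext fun θ => by simp [hLt, gaussianLogLik, sub_sub]
  simp_rw [hLt', hL', inner_gradient_gaussianLogLik_add_perturbation hfθ]
  rw [integral_add (integrable_const _)
      ((integrable_sum_mul_const hεint _).fun_add (integrable_sum_mul_const hηint _)),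
    integral_add (integrable_sum_mul_const hεint _) (integrable_sum_mul_const hηint _),
    integral_sum_mul_const_eq_zero hεint hεmean, integral_sum_mul_const_eq_zero hηint hηmean]
  simp

/-- In the Gaussian regression model, let `ε₁,…,εₙ` and `η₁,…,ηₘ` be
integrable real random variables with zero mean, and let `L̃` be the (random) perturbed
joint log-likelihood built from `ε` and `η`.  Then for every fixed `θ ∈ ℝᵐ`:
`E[⟪∇L θ, ∇L̃ θ⟫] = ‖∇L θ‖²`. -/
theorem expectation_inner_gradient_perturbed_gradient
    {n m : ℕ} (hn : 1 ≤ n) (hm : 1 ≤ m)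
    (σ α : ℝ) (hσ : 0 < σ) (hα : 0 < α)
    (y : Fin n → ℝ)
    (f : Fin n → EuclideanSpace ℝ (Fin m) → ℝ)
    (hf : ∀ i, ContDiff ℝ 2 (f i))
    (L : EuclideanSpace ℝ (Fin m) → ℝ)
    (hL : ∀ θ, L θ = -(∑ i, (f i θ - y i) ^ 2 / (2 * σ ^ 2))
      - ∑ j, (θ j) ^ 2 / (2 * α ^ 2))
    {Ω : Type*} [MeasurableSpace Ω] (P : Measure Ω) [IsProbabilityMeasure P]
    (ε : Ω → Fin n → ℝ) (η : Ω → EuclideanSpace ℝ (Fin m))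
    (hεint : ∀ i, Integrable (fun ω => ε ω i) P)
    (hηint : ∀ j, Integrable (fun ω => η ω j) P)
    (hεmean : ∀ i, ∫ ω, ε ω i ∂P = 0)
    (hηmean : ∀ j, ∫ ω, η ω j ∂P = 0)
    (Lt : Ω → EuclideanSpace ℝ (Fin m) → ℝ)
    (hLt : ∀ ω θ, Lt ω θ = -(∑ i, (f i θ - y i - ε ω i) ^ 2 / (2 * σ ^ 2))
      - ∑ j, (θ j - η ω j) ^ 2 / (2 * α ^ 2)) :
    ∀ θ, ∫ ω, ⟪gradient L θ, gradient (Lt ω) θ⟫ ∂P = ‖gradient L θ‖ ^ 2 :=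
  expectation_inner_gradient_perturbed_gradient_general σ α y f hf L hL P ε η hεint hηint hεmean
    hηmean Lt hLt
end

section
/- (Gradient-norm decomposition, Lemma 1 of the appendix up to rearrangement) In the Gaussian regression model, let ε₁,…,εₙ, η₁,…,ηₘ be mutually independent square-integrable real random variables with E[ε_i] = 0, E[ε_i²] = σ², E[η_j] = 0, E[η_j²] = α², and let L̃ be the (random) perturbed joint log-likelihood built from ε and η. Then for every fixed θ ∈ ℝᵐ: E[‖∇L̃(θ)‖²] = ‖∇L(θ)‖² + (1/σ²)·Σ_{i=1}^n ‖∇f_i(θ)‖² + m/α². -/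
open MeasureTheory ProbabilityTheory InnerProductSpace
open scoped RealInnerProductSpace

/-!
Up to a constant in `θ`, perturbing labels and prior mean adds `σ⁻² ∑ᵢ εᵢ fᵢ(θ) + α⁻² ⟪η, θ⟫` to
the log-likelihood, so `∇L̃(θ) = ∇L(θ) + ∑ₖ ξₖ vₖ` for the centred, independent noises
`ξ = (ε, η)` and the fixed vectors `v = (σ⁻² ∇fᵢ(θ), α⁻² eⱼ)`, `eⱼ` the standard basis. Expanding
the square, the cross terms have zero mean, so `E‖∇L̃(θ)‖² = ‖∇L(θ)‖² + ∑ₖ E[ξₖ²] ‖vₖ‖²`.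
-/

theorem gradient_add_sum_smul_add_inner_sub_const {F : Type*} [NormedAddCommGroup F]
    [InnerProductSpace ℝ F] [CompleteSpace F] {ι : Type*} [Fintype ι]
    {g : F → ℝ} {f : ι → F → ℝ} {x : F}
    (hg : DifferentiableAt ℝ g x) (hf : ∀ i, DifferentiableAt ℝ (f i) x)
    (c : ι → ℝ) (h : F) (b : ℝ) :
    gradient (fun y => g y + ∑ i, c i * f i y + ⟪h, y⟫ - b) x
      = gradient g x + ∑ i, c i • gradient (f i) x + h := by
  apply HasGradientAt.gradient
  rw [hasGradientAt_iff_hasFDerivAt, map_add, map_add, map_sum]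
  simp only [map_smul, toDual_gradient]
  refine ((hg.hasFDerivAt.add (HasFDerivAt.fun_sum fun i _ =>
    (hf i).hasFDerivAt.const_mul (c i))).add ((innerSL ℝ h).hasFDerivAt)).sub_const b
    |>.congr_fderiv ?_
  ext y
  simp [toDual_apply_apply]

theorem norm_add_sum_smul_sq {E : Type*} [NormedAddCommGroup E] [InnerProductSpace ℝ E]
    {ι : Type*} [Fintype ι] (G : E) (c : ι → ℝ) (v : ι → E) :
    ‖G + ∑ k, c k • v k‖ ^ 2
      = ‖G‖ ^ 2 + ∑ k, 2 * ⟪G, v k⟫ * c k + ∑ k, ∑ l, ⟪v k, v l⟫ * (c k * c l) := by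
  rw [norm_add_sq_real, ← real_inner_self_eq_norm_sq (∑ k, c k • v k)]
  simp only [inner_sum, sum_inner, real_inner_smul_left, real_inner_smul_right, Finset.mul_sum]
  congr 1
  · congr 1
    exact Finset.sum_congr rfl fun k _ => by ring
  · exact Finset.sum_congr rfl fun k _ => Finset.sum_congr rfl fun l _ => by
      rw [real_inner_comm]; ring

section Expectation

variable {Ω : Type*} [MeasurableSpace Ω] {P : Measure Ω} {ι : Type*}

theorem ProbabilityTheory.iIndepFun.pairwise_integral_mul_eq_zero {ξ : ι → Ω → ℝ}
    (hindep : iIndepFun ξ P) (hmeas : ∀ k, AEStronglyMeasurable (ξ k) P)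
    (hmean : ∀ k, ∫ ω, ξ k ω ∂P = 0) :
    Pairwise fun k l => ∫ ω, ξ k ω * ξ l ω ∂P = 0 := fun k l hkl =>
  ((hindep.indepFun hkl).integral_fun_mul_eq_mul_integral (hmeas k) (hmeas l)).trans
    (by rw [hmean k, zero_mul])

theorem integral_norm_add_sum_smul_sq [Fintype ι] [IsProbabilityMeasure P]
    {E : Type*} [NormedAddCommGroup E] [InnerProductSpace ℝ E]
    {ξ : ι → Ω → ℝ} (hL2 : ∀ k, MemLp (ξ k) 2 P) (hmean : ∀ k, ∫ ω, ξ k ω ∂P = 0)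
    (huncorr : Pairwise fun k l => ∫ ω, ξ k ω * ξ l ω ∂P = 0) (G : E) (v : ι → E) :
    ∫ ω, ‖G + ∑ k, ξ k ω • v k‖ ^ 2 ∂P = ‖G‖ ^ 2 + ∑ k, (∫ ω, ξ k ω ^ 2 ∂P) * ‖v k‖ ^ 2 := by
  classical
  have hint : ∀ k, Integrable (ξ k) P := fun k => (hL2 k).integrable one_le_two
  have hint_mul : ∀ k l, Integrable (fun ω => ξ k ω * ξ l ω) P := fun k l =>
    (hL2 k).integrable_mul (hL2 l)
  have hcross : ∀ k l, ∫ ω, ξ k ω * ξ l ω ∂P = if k = l then ∫ ω, ξ k ω ^ 2 ∂P else 0 := by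
    intro k l
    split_ifs with hkl
    · simp [hkl, sq]
    · exact huncorr hkl
  have hlin : Integrable (fun ω => ∑ k, 2 * ⟪G, v k⟫ * ξ k ω) P :=
    integrable_finsetSum _ fun k _ => (hint k).const_mul _
  have hquad : Integrable (fun ω => ∑ k, ∑ l, ⟪v k, v l⟫ * (ξ k ω * ξ l ω)) P :=
    integrable_finsetSum _ fun k _ => integrable_finsetSum _ fun l _ => (hint_mul k l).const_mul _
  have hquad_row : ∀ k, ∫ ω, ∑ l, ⟪v k, v l⟫ * (ξ k ω * ξ l ω) ∂P
      = (∫ ω, ξ k ω ^ 2 ∂P) * ‖v k‖ ^ 2 := by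
    intro k
    rw [integral_finsetSum _ fun l _ => (hint_mul k l).const_mul _]
    simp only [integral_const_mul, hcross, mul_ite, mul_zero, Finset.sum_ite_eq,
      Finset.mem_univ, if_true, real_inner_self_eq_norm_sq]
    ring
  simp only [norm_add_sum_smul_sq]
  rw [integral_add ((integrable_const _).fun_add hlin) hquad,
    integral_add (integrable_const _) hlin,
    integral_finsetSum _ fun k _ => (hint k).const_mul _,
    integral_finsetSum _ fun k _ => integrable_finsetSum _ fun l _ => (hint_mul k l).const_mul _]
  simp only [integral_const, probReal_univ, one_smul, integral_const_mul, hmean, mul_zero,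
    Finset.sum_const_zero, add_zero, hquad_row]

end Expectation

theorem perturbed_logLik_eq {n m : ℕ} (σ α : ℝ) (a y e : Fin n → ℝ)
    (θ h : EuclideanSpace ℝ (Fin m)) :
    -(∑ i, (a i - y i - e i) ^ 2 / (2 * σ ^ 2)) - ∑ j, (θ j - h j) ^ 2 / (2 * α ^ 2)
      = (-(∑ i, (a i - y i) ^ 2 / (2 * σ ^ 2)) - ∑ j, θ j ^ 2 / (2 * α ^ 2))
        + ∑ i, (σ ^ 2)⁻¹ * e i * a i + ⟪(α ^ 2)⁻¹ • h, θ⟫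
        - (∑ i, e i * (e i + 2 * y i) / (2 * σ ^ 2) + ∑ j, h j ^ 2 / (2 * α ^ 2)) := by
  have hres : ∀ i, (a i - y i - e i) ^ 2 / (2 * σ ^ 2) = (a i - y i) ^ 2 / (2 * σ ^ 2)
      - (σ ^ 2)⁻¹ * e i * a i + e i * (e i + 2 * y i) / (2 * σ ^ 2) := fun i => by ring
  have hprior : ∀ j, (θ j - h j) ^ 2 / (2 * α ^ 2) = θ j ^ 2 / (2 * α ^ 2)
      - (α ^ 2)⁻¹ * (θ j * h j) + h j ^ 2 / (2 * α ^ 2) := fun j => by ring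
  rw [real_inner_smul_left, PiLp.inner_apply, Finset.mul_sum]
  simp only [hres, hprior, Finset.sum_add_distrib, Finset.sum_sub_distrib, RCLike.inner_apply,
    conj_trivial]
  ring

theorem gradient_perturbed_logLik {n m : ℕ} {σ α : ℝ} {y : Fin n → ℝ}
    {f : Fin n → EuclideanSpace ℝ (Fin m) → ℝ} {L : EuclideanSpace ℝ (Fin m) → ℝ}
    (hL : ∀ θ, L θ = -(∑ i, (f i θ - y i) ^ 2 / (2 * σ ^ 2)) - ∑ j, θ j ^ 2 / (2 * α ^ 2))
    (e : Fin n → ℝ) (h : EuclideanSpace ℝ (Fin m)) {θ : EuclideanSpace ℝ (Fin m)}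
    (hf : ∀ i, DifferentiableAt ℝ (f i) θ) :
    gradient (fun x => -(∑ i, (f i x - y i - e i) ^ 2 / (2 * σ ^ 2))
        - ∑ j, (x j - h j) ^ 2 / (2 * α ^ 2)) θ
      = gradient L θ + ∑ i, ((σ ^ 2)⁻¹ * e i) • gradient (f i) θ + (α ^ 2)⁻¹ • h := by
  have hLdiff : DifferentiableAt ℝ L θ := by
    rw [funext hL]
    fun_prop
  simp only [perturbed_logLik_eq, ← hL]
  exact gradient_add_sum_smul_add_inner_sub_const hLdiff hf _ _ _

theorem expectation_perturbed_gradient_norm_sq_general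
    {n m : ℕ}
    (σ α : ℝ)
    (y : Fin n → ℝ)
    (f : Fin n → EuclideanSpace ℝ (Fin m) → ℝ)
    (hf : ∀ i, ContDiff ℝ 2 (f i))
    (L : EuclideanSpace ℝ (Fin m) → ℝ)
    (hL : ∀ θ, L θ = -(∑ i, (f i θ - y i) ^ 2 / (2 * σ ^ 2))
      - ∑ j, (θ j) ^ 2 / (2 * α ^ 2))
    {Ω : Type*} [MeasurableSpace Ω] (P : Measure Ω) [IsProbabilityMeasure P]
    (ε : Ω → Fin n → ℝ) (η : Ω → EuclideanSpace ℝ (Fin m))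
    (hεsq : ∀ i, MemLp (fun ω => ε ω i) 2 P)
    (hηsq : ∀ j, MemLp (fun ω => η ω j) 2 P)
    (hindep : iIndepFun
      (Sum.elim (fun i ω => ε ω i) (fun j ω => η ω j)) P)
    (hεmean : ∀ i, ∫ ω, ε ω i ∂P = 0)
    (hηmean : ∀ j, ∫ ω, η ω j ∂P = 0)
    (hεvar : ∀ i, ∫ ω, (ε ω i) ^ 2 ∂P = σ ^ 2)
    (hηvar : ∀ j, ∫ ω, (η ω j) ^ 2 ∂P = α ^ 2)
    (Lt : Ω → EuclideanSpace ℝ (Fin m) → ℝ)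
    (hLt : ∀ ω θ, Lt ω θ = -(∑ i, (f i θ - y i - ε ω i) ^ 2 / (2 * σ ^ 2))
      - ∑ j, (θ j - η ω j) ^ 2 / (2 * α ^ 2)) :
    ∀ θ, ∫ ω, ‖gradient (Lt ω) θ‖ ^ 2 ∂P =
      ‖gradient L θ‖ ^ 2 + (1 / σ ^ 2) * ∑ i, ‖gradient (f i) θ‖ ^ 2
        + (m : ℝ) / α ^ 2 := by
  intro θ
  set ξ : Fin n ⊕ Fin m → Ω → ℝ := Sum.elim (fun i ω => ε ω i) (fun j ω => η ω j)
  set v : Fin n ⊕ Fin m → EuclideanSpace ℝ (Fin m) := Sum.elim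
    (fun i => (σ ^ 2)⁻¹ • gradient (f i) θ) (fun j => (α ^ 2)⁻¹ • EuclideanSpace.basisFun _ ℝ j)
  have hgrad : ∀ ω, gradient (Lt ω) θ = gradient L θ + ∑ k, ξ k ω • v k := by
    intro ω
    rw [funext (hLt ω),
      gradient_perturbed_logLik hL _ _ fun i => (hf i).differentiable two_ne_zero θ,
      Fintype.sum_sum_type]
    conv_lhs => rw [← (EuclideanSpace.basisFun (Fin m) ℝ).sum_repr (η ω)]
    simp only [ξ, v, Sum.elim_inl, Sum.elim_inr, EuclideanSpace.basisFun_repr, Finset.smul_sum,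
      smul_smul, mul_comm, add_assoc]
  have hL2 : ∀ k, MemLp (ξ k) 2 P := Sum.forall.2 ⟨hεsq, hηsq⟩
  have hmean : ∀ k, ∫ ω, ξ k ω ∂P = 0 := Sum.forall.2 ⟨hεmean, hηmean⟩
  have huncorr := hindep.pairwise_integral_mul_eq_zero (fun k => (hL2 k).aestronglyMeasurable) hmean
  simp only [hgrad]
  rw [integral_norm_add_sum_smul_sq hL2 hmean huncorr, Fintype.sum_sum_type]
  simp only [ξ, v, Sum.elim_inl, Sum.elim_inr, hεvar, hηvar, norm_smul, norm_inv, norm_pow,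
    Real.norm_eq_abs, sq_abs, OrthonormalBasis.norm_eq_one, mul_one, Finset.sum_const,
    Finset.card_univ, Fintype.card_fin, nsmul_eq_mul, mul_pow, Finset.mul_sum]
  field_simp
  ring

/-- **gradient-norm decomposition, Lemma 1 of the appendix up to
rearrangement.** In the Gaussian regression model, let `ε₁,…,εₙ, η₁,…,ηₘ` be mutually
independent square-integrable real random variables with `E[εᵢ] = 0`, `E[εᵢ²] = σ²`,
`E[ηⱼ] = 0`, `E[ηⱼ²] = α²`, and let `L̃` be the (random) perturbed joint log-likelihood
built from `ε` and `η`.  Then for every fixed `θ ∈ ℝᵐ`: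
`E[‖∇L̃ θ‖²] = ‖∇L θ‖² + (1/σ²) Σᵢ ‖∇fᵢ θ‖² + m/α²`. -/
theorem expectation_perturbed_gradient_norm_sq
    {n m : ℕ} (hn : 1 ≤ n) (hm : 1 ≤ m)
    (σ α : ℝ) (hσ : 0 < σ) (hα : 0 < α)
    (y : Fin n → ℝ)
    (f : Fin n → EuclideanSpace ℝ (Fin m) → ℝ)
    (hf : ∀ i, ContDiff ℝ 2 (f i))
    (L : EuclideanSpace ℝ (Fin m) → ℝ)
    (hL : ∀ θ, L θ = -(∑ i, (f i θ - y i) ^ 2 / (2 * σ ^ 2))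
      - ∑ j, (θ j) ^ 2 / (2 * α ^ 2))
    {Ω : Type*} [MeasurableSpace Ω] (P : Measure Ω) [IsProbabilityMeasure P]
    (ε : Ω → Fin n → ℝ) (η : Ω → EuclideanSpace ℝ (Fin m))
    (hεsq : ∀ i, MemLp (fun ω => ε ω i) 2 P)
    (hηsq : ∀ j, MemLp (fun ω => η ω j) 2 P)
    (hindep : iIndepFun
      (Sum.elim (fun i ω => ε ω i) (fun j ω => η ω j)) P)
    (hεmean : ∀ i, ∫ ω, ε ω i ∂P = 0)
    (hηmean : ∀ j, ∫ ω, η ω j ∂P = 0)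
    (hεvar : ∀ i, ∫ ω, (ε ω i) ^ 2 ∂P = σ ^ 2)
    (hηvar : ∀ j, ∫ ω, (η ω j) ^ 2 ∂P = α ^ 2)
    (Lt : Ω → EuclideanSpace ℝ (Fin m) → ℝ)
    (hLt : ∀ ω θ, Lt ω θ = -(∑ i, (f i θ - y i - ε ω i) ^ 2 / (2 * σ ^ 2))
      - ∑ j, (θ j - η ω j) ^ 2 / (2 * α ^ 2)) :
    ∀ θ, ∫ ω, ‖gradient (Lt ω) θ‖ ^ 2 ∂P =
      ‖gradient L θ‖ ^ 2 + (1 / σ ^ 2) * ∑ i, ‖gradient (f i) θ‖ ^ 2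
        + (m : ℝ) / α ^ 2 :=
  expectation_perturbed_gradient_norm_sq_general σ α y f hf L hL P ε η hεsq hηsq hindep hεmean
    hηmean hεvar hηvar Lt hLt
end
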